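/- arXiv:1802.07836 — 9 statements merged into one kernel-verified Lean document; each statement's English description precedes it below -/
import Mathlib

section
/- The integer six-tuples (k, l) = (12, 10, -8; 9, 5, 0) and (k', l') = (50, 50, -2; 49, 49, 0) satisfy k1+k2+k3 = l1+l2+l3, k1'+k2'+k3' = l1'+l2'+l3', and condition (†), and their invariants compare as follows: |σ2(k) − σ2(l)| = |σ2(k') − σ2(l')| = 101; σ3(k) − σ3(l) ≡ σ3(k') − σ3(l') (mod 101); σ1(l) ≡ σ1(l') (mod 3); but 2·σ1(l)^2 − 6·σ2(l) is NOT congruent to 2·σ1(l')^2 − 6·σ2(l') modulo 101. (Arithmetic witness that these two positively curved Eschenburg spaces have equal homotopy invariants r, s, Σ but distinct first Pontryagin classes, hence are not tangentially homotopy equivalent.) -/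
/-- First elementary symmetric polynomial in three variables. -/
def esig1 (a b c : ℤ) : ℤ := a + b + c

/-- Second elementary symmetric polynomial in three variables. -/
def esig2 (a b c : ℤ) : ℤ := a * b + b * c + a * c

/-- Third elementary symmetric polynomial in three variables. -/
def esig3 (a b c : ℤ) : ℤ := a * b * c

theorem eschenburg_pair_2 :
    -- the parameter vectors define Eschenburg spaces: σ₁(k) = σ₁(l)
    esig1 12 10 (-8) = esig1 9 5 0 ∧
    esig1 50 50 (-2) = esig1 49 49 0 ∧
    -- condition (†) for both tuples
    ((12 : ℤ) ≥ 10 ∧ (10 : ℤ) > 9 ∧ (9 : ℤ) ≥ 5 ∧ (5 : ℤ) ≥ 0 ∧ (0 : ℤ) = 0) ∧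
    ((50 : ℤ) ≥ 50 ∧ (50 : ℤ) > 49 ∧ (49 : ℤ) ≥ 49 ∧ (49 : ℤ) ≥ 0 ∧ (0 : ℤ) = 0) ∧
    -- invariant r
    |esig2 12 10 (-8) - esig2 9 5 0| = 101 ∧
    |esig2 50 50 (-2) - esig2 49 49 0| = 101 ∧
    -- invariant s
    esig3 12 10 (-8) - esig3 9 5 0 ≡ esig3 50 50 (-2) - esig3 49 49 0 [ZMOD 101] ∧
    -- invariant Σ
    esig1 9 5 0 ≡ esig1 49 49 0 [ZMOD 3] ∧
    -- first Pontryagin class p₁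
    ¬ (2 * (esig1 9 5 0)^2 - 6 * esig2 9 5 0 ≡ 2 * (esig1 49 49 0)^2 - 6 * esig2 49 49 0 [ZMOD 101]) := by
  -- r = 101 for both; s ≡ 50 and Σ ≡ 2 for both; p₁ ≡ 21 versus p₁ ≡ 55 (mod 101).
  refine ⟨rfl, rfl, by norm_num, by norm_num, rfl, rfl, ?_, ?_, ?_⟩ <;> decide
end

section
/- The integer six-tuples (k, l) = (19, 17, -7; 16, 13, 0) and (k', l') = (68, 68, -2; 67, 67, 0) satisfy k1+k2+k3 = l1+l2+l3, k1'+k2'+k3' = l1'+l2'+l3', and condition (†), and their invariants compare as follows: |σ2(k) − σ2(l)| = |σ2(k') − σ2(l')| = 137; σ3(k) − σ3(l) ≡ σ3(k') − σ3(l') (mod 137); σ1(l) ≡ σ1(l') (mod 3); but 2·σ1(l)^2 − 6·σ2(l) is NOT congruent to 2·σ1(l')^2 − 6·σ2(l') modulo 137. (Arithmetic witness that these two positively curved Eschenburg spaces have equal homotopy invariants r, s, Σ but distinct first Pontryagin classes, hence are not tangentially homotopy equivalent.) -/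
theorem eschenburg_pair_3 :
    -- the parameter vectors define Eschenburg spaces: σ₁(k) = σ₁(l)
    esig1 19 17 (-7) = esig1 16 13 0 ∧
    esig1 68 68 (-2) = esig1 67 67 0 ∧
    -- condition (†) for both tuples
    ((19 : ℤ) ≥ 17 ∧ (17 : ℤ) > 16 ∧ (16 : ℤ) ≥ 13 ∧ (13 : ℤ) ≥ 0 ∧ (0 : ℤ) = 0) ∧
    ((68 : ℤ) ≥ 68 ∧ (68 : ℤ) > 67 ∧ (67 : ℤ) ≥ 67 ∧ (67 : ℤ) ≥ 0 ∧ (0 : ℤ) = 0) ∧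
    -- invariant r
    |esig2 19 17 (-7) - esig2 16 13 0| = 137 ∧
    |esig2 68 68 (-2) - esig2 67 67 0| = 137 ∧
    -- invariant s
    esig3 19 17 (-7) - esig3 16 13 0 ≡ esig3 68 68 (-2) - esig3 67 67 0 [ZMOD 137] ∧
    -- invariant Σ
    esig1 16 13 0 ≡ esig1 67 67 0 [ZMOD 3] ∧
    -- first Pontryagin class p₁
    ¬ (2 * (esig1 16 13 0)^2 - 6 * esig2 16 13 0 ≡ 2 * (esig1 67 67 0)^2 - 6 * esig2 67 67 0 [ZMOD 137]) := by
  decide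
end

section
/- The integer six-tuples (k, l) = (30, 26, -6; 25, 25, 0) and (k', l') = (16, 16, -10; 13, 9, 0) satisfy k1+k2+k3 = l1+l2+l3, k1'+k2'+k3' = l1'+l2'+l3', and condition (†), and their invariants compare as follows: |σ2(k) − σ2(l)| = |σ2(k') − σ2(l')| = 181; σ3(k) − σ3(l) ≡ −(σ3(k') − σ3(l')) (mod 181); σ1(l) ≡ −σ1(l') (mod 3); but 2·σ1(l)^2 − 6·σ2(l) is NOT congruent to 2·σ1(l')^2 − 6·σ2(l') modulo 181. (Arithmetic witness that these two positively curved Eschenburg spaces have equal homotopy invariants r, s, Σ up to a simultaneous orientation reversal, but distinct first Pontryagin classes, hence are not tangentially homotopy equivalent.) -/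
theorem eschenburg_pair_4 :
    -- the parameter vectors define Eschenburg spaces: σ₁(k) = σ₁(l)
    esig1 30 26 (-6) = esig1 25 25 0 ∧
    esig1 16 16 (-10) = esig1 13 9 0 ∧
    -- condition (†) for both tuples
    ((30 : ℤ) ≥ 26 ∧ (26 : ℤ) > 25 ∧ (25 : ℤ) ≥ 25 ∧ (25 : ℤ) ≥ 0 ∧ (0 : ℤ) = 0) ∧
    ((16 : ℤ) ≥ 16 ∧ (16 : ℤ) > 13 ∧ (13 : ℤ) ≥ 9 ∧ (9 : ℤ) ≥ 0 ∧ (0 : ℤ) = 0) ∧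
    -- invariant r
    |esig2 30 26 (-6) - esig2 25 25 0| = 181 ∧
    |esig2 16 16 (-10) - esig2 13 9 0| = 181 ∧
    -- invariant s
    esig3 30 26 (-6) - esig3 25 25 0 ≡ -(esig3 16 16 (-10) - esig3 13 9 0) [ZMOD 181] ∧
    -- invariant Σ
    esig1 25 25 0 ≡ -(esig1 13 9 0) [ZMOD 3] ∧
    -- first Pontryagin class p₁
    ¬ (2 * (esig1 25 25 0)^2 - 6 * esig2 25 25 0 ≡ 2 * (esig1 13 9 0)^2 - 6 * esig2 13 9 0 [ZMOD 181]) := by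
  refine ⟨by norm_num [esig1], by norm_num [esig1], by norm_num, by norm_num, by norm_num [esig2], by norm_num [esig2], by simp only [esig3]; decide, by decide, by simp only [esig1, esig2]; decide⟩
end

section
/- The integer six-tuples (k, l) = (15, 14, -11; 12, 6, 0) and (k', l') = (45, 43, -4; 42, 42, 0) satisfy k1+k2+k3 = l1+l2+l3, k1'+k2'+k3' = l1'+l2'+l3', and condition (†), and their invariants compare as follows: |σ2(k) − σ2(l)| = |σ2(k') − σ2(l')| = 181; σ3(k) − σ3(l) ≡ σ3(k') − σ3(l') (mod 181); σ1(l) ≡ σ1(l') ≡ 0 (mod 3); but 2·σ1(l)^2 − 6·σ2(l) is NOT congruent to 2·σ1(l')^2 − 6·σ2(l') modulo 181. (Arithmetic witness that these two positively curved Eschenburg spaces have equal homotopy invariants r, s, Σ but distinct first Pontryagin classes, hence are not tangentially homotopy equivalent.) -/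
theorem eschenburg_pair_5 :
    -- the parameter vectors define Eschenburg spaces: σ₁(k) = σ₁(l)
    esig1 15 14 (-11) = esig1 12 6 0 ∧
    esig1 45 43 (-4) = esig1 42 42 0 ∧
    -- condition (†) for both tuples
    ((15 : ℤ) ≥ 14 ∧ (14 : ℤ) > 12 ∧ (12 : ℤ) ≥ 6 ∧ (6 : ℤ) ≥ 0 ∧ (0 : ℤ) = 0) ∧
    ((45 : ℤ) ≥ 43 ∧ (43 : ℤ) > 42 ∧ (42 : ℤ) ≥ 42 ∧ (42 : ℤ) ≥ 0 ∧ (0 : ℤ) = 0) ∧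
    -- invariant r
    |esig2 15 14 (-11) - esig2 12 6 0| = 181 ∧
    |esig2 45 43 (-4) - esig2 42 42 0| = 181 ∧
    -- invariant s
    esig3 15 14 (-11) - esig3 12 6 0 ≡ esig3 45 43 (-4) - esig3 42 42 0 [ZMOD 181] ∧
    -- invariant Σ
    (esig1 12 6 0 ≡ 0 [ZMOD 3] ∧ esig1 42 42 0 ≡ 0 [ZMOD 3]) ∧
    -- first Pontryagin class p₁
    ¬ (2 * (esig1 12 6 0)^2 - 6 * esig2 12 6 0 ≡ 2 * (esig1 42 42 0)^2 - 6 * esig2 42 42 0 [ZMOD 181]) := by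
  have hr : esig2 15 14 (-11) - esig2 12 6 0 = -181 := by decide
  have hr' : esig2 45 43 (-4) - esig2 42 42 0 = -181 := by decide
  have hs : esig3 15 14 (-11) - esig3 12 6 0 = -2310 := by decide
  have hs' : esig3 45 43 (-4) - esig3 42 42 0 = -7740 := by decide
  have hsig : esig1 12 6 0 = 18 := by decide
  have hsig' : esig1 42 42 0 = 84 := by decide
  have hp : 2 * (esig1 12 6 0)^2 - 6 * esig2 12 6 0 = 216 := by decide
  have hp' : 2 * (esig1 42 42 0)^2 - 6 * esig2 42 42 0 = 3528 := by decide
  refine ⟨by decide, by decide, by norm_num, by norm_num, by rw [hr]; rfl, by rw [hr']; rfl,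
    ?_, ⟨by rw [hsig]; decide, by rw [hsig']; decide⟩, ?_⟩
  -- -2310 - (-7740) = 30 · 181, whereas 3528 - 216 = 18 · 181 + 54.
  · rw [hs, hs']; decide
  · rw [hp, hp']; decide
end

section
/- The integer six-tuples (k, l) = (16, 13, -11; 12, 6, 0) and (k', l') = (91, 91, -2; 90, 90, 0) satisfy k1+k2+k3 = l1+l2+l3, k1'+k2'+k3' = l1'+l2'+l3', and condition (†), and their invariants compare as follows: |σ2(k) − σ2(l)| = |σ2(k') − σ2(l')| = 183; σ3(k) − σ3(l) ≡ σ3(k') − σ3(l') (mod 183); σ1(l) ≡ σ1(l') ≡ 0 (mod 3); but 2·σ1(l)^2 − 6·σ2(l) is NOT congruent to 2·σ1(l')^2 − 6·σ2(l') modulo 183. (Arithmetic witness that these two positively curved Eschenburg spaces have equal homotopy invariants r, s, Σ but distinct first Pontryagin classes, hence are not tangentially homotopy equivalent.) -/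
theorem eschenburg_pair_6 :
    -- the parameter vectors define Eschenburg spaces: σ₁(k) = σ₁(l)
    esig1 16 13 (-11) = esig1 12 6 0 ∧
    esig1 91 91 (-2) = esig1 90 90 0 ∧
    -- condition (†) for both tuples
    ((16 : ℤ) ≥ 13 ∧ (13 : ℤ) > 12 ∧ (12 : ℤ) ≥ 6 ∧ (6 : ℤ) ≥ 0 ∧ (0 : ℤ) = 0) ∧
    ((91 : ℤ) ≥ 91 ∧ (91 : ℤ) > 90 ∧ (90 : ℤ) ≥ 90 ∧ (90 : ℤ) ≥ 0 ∧ (0 : ℤ) = 0) ∧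
    -- invariant r
    |esig2 16 13 (-11) - esig2 12 6 0| = 183 ∧
    |esig2 91 91 (-2) - esig2 90 90 0| = 183 ∧
    -- invariant s
    esig3 16 13 (-11) - esig3 12 6 0 ≡ esig3 91 91 (-2) - esig3 90 90 0 [ZMOD 183] ∧
    -- invariant Σ
    (esig1 12 6 0 ≡ 0 [ZMOD 3] ∧ esig1 90 90 0 ≡ 0 [ZMOD 3]) ∧
    -- first Pontryagin class p₁
    ¬ (2 * (esig1 12 6 0)^2 - 6 * esig2 12 6 0 ≡ 2 * (esig1 90 90 0)^2 - 6 * esig2 90 90 0 [ZMOD 183]) := by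
  refine ⟨by decide, by decide, by norm_num, by norm_num, by decide, by decide, by decide, ⟨by decide, by decide⟩, by decide⟩
end

section
/- The integer six-tuples (k, l) = (58, 54, -34; 39, 39, 0) and (k', l') = (45, 41, -47; 39, 0, 0) satisfy k1+k2+k3 = l1+l2+l3, k1'+k2'+k3' = l1'+l2'+l3', and condition (†), and their invariants compare as follows: |σ2(k) − σ2(l)| = |σ2(k') − σ2(l')| = 2197; σ3(k) − σ3(l) ≡ σ3(k') − σ3(l') (mod 2197); σ1(l) ≡ σ1(l') ≡ 0 (mod 3); and 2·σ1(l)^2 − 6·σ2(l) ≡ 2·σ1(l')^2 − 6·σ2(l') (mod 2197). (Arithmetic witness that these two positively curved Eschenburg spaces have equal invariants r, s, Σ and equal first Pontryagin classes; together with the agreement of the Kreck-Stolz invariant s22 and the disagreement of s2, this shows they are tangentially homotopy equivalent but not homeomorphic.) -/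
theorem eschenburg_pair_7 :
    -- the parameter vectors define Eschenburg spaces: σ₁(k) = σ₁(l)
    esig1 58 54 (-34) = esig1 39 39 0 ∧
    esig1 45 41 (-47) = esig1 39 0 0 ∧
    -- condition (†) for both tuples
    ((58 : ℤ) ≥ 54 ∧ (54 : ℤ) > 39 ∧ (39 : ℤ) ≥ 39 ∧ (39 : ℤ) ≥ 0 ∧ (0 : ℤ) = 0) ∧
    ((45 : ℤ) ≥ 41 ∧ (41 : ℤ) > 39 ∧ (39 : ℤ) ≥ 0 ∧ (0 : ℤ) ≥ 0 ∧ (0 : ℤ) = 0) ∧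
    -- invariant r
    |esig2 58 54 (-34) - esig2 39 39 0| = 2197 ∧
    |esig2 45 41 (-47) - esig2 39 0 0| = 2197 ∧
    -- invariant s
    esig3 58 54 (-34) - esig3 39 39 0 ≡ esig3 45 41 (-47) - esig3 39 0 0 [ZMOD 2197] ∧
    -- invariant Σ
    (esig1 39 39 0 ≡ 0 [ZMOD 3] ∧ esig1 39 0 0 ≡ 0 [ZMOD 3]) ∧
    -- first Pontryagin class p₁
    2 * (esig1 39 39 0)^2 - 6 * esig2 39 39 0 ≡ 2 * (esig1 39 0 0)^2 - 6 * esig2 39 0 0 [ZMOD 2197] := by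
  refine ⟨by decide, by decide, by norm_num, by norm_num, by decide, by decide, by decide, ⟨by decide, by decide⟩, by decide⟩
end

section
/- The integer six-tuples (k, l) = (79, 58, -131; 6, 0, 0) and (k', l') = (92, 47, -127; 6, 6, 0) satisfy k1+k2+k3 = l1+l2+l3, k1'+k2'+k3' = l1'+l2'+l3', and condition (†), and their invariants compare as follows: |σ2(k) − σ2(l)| = |σ2(k') − σ2(l')| = 13365; σ3(k) − σ3(l) ≡ −(σ3(k') − σ3(l')) (mod 13365); σ1(l) ≡ σ1(l') ≡ 0 (mod 3); and 2·σ1(l)^2 − 6·σ2(l) ≡ 2·σ1(l')^2 − 6·σ2(l') (mod 13365). (Arithmetic witness that, up to a simultaneous orientation reversal, these two positively curved Eschenburg spaces have equal invariants r, s, Σ and equal first Pontryagin classes; together with the behavior of the Kreck-Stolz invariants s22 and s2, this shows they are tangentially homotopy equivalent but not homeomorphic.) -/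
theorem eschenburg_pair_10 :
    -- the parameter vectors define Eschenburg spaces: σ₁(k) = σ₁(l)
    esig1 79 58 (-131) = esig1 6 0 0 ∧
    esig1 92 47 (-127) = esig1 6 6 0 ∧
    -- condition (†) for both tuples
    ((79 : ℤ) ≥ 58 ∧ (58 : ℤ) > 6 ∧ (6 : ℤ) ≥ 0 ∧ (0 : ℤ) ≥ 0 ∧ (0 : ℤ) = 0) ∧
    ((92 : ℤ) ≥ 47 ∧ (47 : ℤ) > 6 ∧ (6 : ℤ) ≥ 6 ∧ (6 : ℤ) ≥ 0 ∧ (0 : ℤ) = 0) ∧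
    -- invariant r
    |esig2 79 58 (-131) - esig2 6 0 0| = 13365 ∧
    |esig2 92 47 (-127) - esig2 6 6 0| = 13365 ∧
    -- invariant s
    esig3 79 58 (-131) - esig3 6 0 0 ≡ -(esig3 92 47 (-127) - esig3 6 6 0) [ZMOD 13365] ∧
    -- invariant Σ
    (esig1 6 0 0 ≡ 0 [ZMOD 3] ∧ esig1 6 6 0 ≡ 0 [ZMOD 3]) ∧
    -- first Pontryagin class p₁
    2 * (esig1 6 0 0)^2 - 6 * esig2 6 0 0 ≡ 2 * (esig1 6 6 0)^2 - 6 * esig2 6 6 0 [ZMOD 13365] := by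
  refine ⟨by decide, by decide, ⟨by decide, by decide, by decide, by decide, rfl⟩, ⟨by decide, by decide, by decide, by decide, rfl⟩, by decide, by decide, by decide, ⟨by decide, by decide⟩, by decide⟩
end

section
/- The action of the circle group S^1 = {z ∈ ℂ : |z| = 1} on the special unitary group SU(3) given by z · A = diag(z^8, z^7, z^{-5}) · A · diag(z^{-6}, z^{-4}, 1) is free: if diag(z^8, z^7, z^{-5}) · A · diag(z^{-6}, z^{-4}, 1) = A for some A ∈ SU(3), then z = 1. -/
/-!
A fixed point `A` of the action satisfies `z ^ (kᵢ - lⱼ) * Aᵢⱼ = Aᵢⱼ` entrywise. Since `A` is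
invertible, each row has a nonzero entry, so every `kᵢ` admits some `lⱼ` with `z ^ (kᵢ - lⱼ) = 1`.
Row `0` offers the exponents `2, 4, 8`, forcing `z ^ 8 = 1`; row `1` offers `1, 3, 7`, forcing
`z ^ 21 = 1`. As `8` and `21` are coprime, `z = 1`.
-/

namespace Matrix

theorem exists_mul_eq_one_of_diagonal_mul_mul_diagonal_eq {n R : Type*} [Fintype n]
    [DecidableEq n] [CommRing R] [NoZeroDivisors R] {d e : n → R} {A : Matrix n n R}
    (hA : A.det ≠ 0) (h : diagonal d * A * diagonal e = A) (i : n) : ∃ j, d i * e j = 1 := by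
  obtain ⟨j, hj⟩ : ∃ j, A i j ≠ 0 := by
    by_contra! hrow
    exact hA (det_eq_zero_of_row_eq_zero i hrow)
  have hentry : d i * e j * A i j = A i j := by
    have hij := congrFun (congrFun h i) j
    rw [mul_diagonal, diagonal_mul] at hij
    linear_combination hij
  exact ⟨j, (mul_left_eq_self₀.mp hentry).resolve_right hj⟩

end Matrix

theorem zpow_eq_one_of_dvd {α : Type*} [DivisionMonoid α] {x : α} {m n : ℤ} (hmn : m ∣ n)
    (hx : x ^ m = 1) : x ^ n = 1 := by
  obtain ⟨c, rfl⟩ := hmn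
  rw [zpow_mul, hx, one_zpow]

/-- The circle action on `SU(3)` with Eschenburg parameters `(8, 7, -5; 6, 4, 0)` is free. -/
theorem eschenburg_action_free_8_7_m5_6_4_0 :
    ∀ z : ℂ, ‖z‖ = 1 →
    ∀ A : Matrix.specialUnitaryGroup (Fin 3) ℂ,
      Matrix.diagonal ![z ^ (8 : ℤ), z ^ (7 : ℤ), z ^ (-5 : ℤ)] *
          (A : Matrix (Fin 3) (Fin 3) ℂ) *
          Matrix.diagonal ![z ^ (-6 : ℤ), z ^ (-4 : ℤ), 1] = (A : Matrix (Fin 3) (Fin 3) ℂ) →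
      z = 1 := by
  intro z hz A hA
  have hz0 : z ≠ 0 := by
    rintro rfl
    simp at hz
  have hdet : (A : Matrix (Fin 3) (Fin 3) ℂ).det ≠ 0 := by
    simp [(Matrix.mem_specialUnitaryGroup_iff.mp A.2).2]
  have h8 : z ^ (8 : ℤ) = 1 := by
    obtain ⟨j, hj⟩ := Matrix.exists_mul_eq_one_of_diagonal_mul_mul_diagonal_eq hdet hA 0
    fin_cases j <;>
      simp only [Fin.zero_eta, Fin.mk_one, Fin.reduceFinMk, Matrix.cons_val, ← zpow_add₀ hz0,
        mul_one] at hj <;>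
      exact zpow_eq_one_of_dvd (by norm_num) hj
  have h21 : z ^ (21 : ℤ) = 1 := by
    obtain ⟨j, hj⟩ := Matrix.exists_mul_eq_one_of_diagonal_mul_mul_diagonal_eq hdet hA 1
    fin_cases j <;>
      simp only [Fin.zero_eta, Fin.mk_one, Fin.reduceFinMk, Matrix.cons_val, ← zpow_add₀ hz0,
        mul_one] at hj <;>
      exact zpow_eq_one_of_dvd (by norm_num) hj
  rw [zpow_ofNat] at h8 h21
  exact (pow_eq_one_iff_of_coprime (by norm_num : Nat.Coprime 8 21)).mp ⟨h8, h21⟩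
end

section
/- The action of the circle group S^1 = {z ∈ ℂ : |z| = 1} on the special unitary group SU(3) given by z · A = diag(z^{21}, z^{21}, z^{-2}) · A · diag(z^{-20}, z^{-20}, 1) is free: if diag(z^{21}, z^{21}, z^{-2}) · A · diag(z^{-20}, z^{-20}, 1) = A for some A ∈ SU(3), then z = 1. -/
/-!
Only the weights of the first two rows and columns matter. For `i, j ∈ {0, 1}` the fixed-point
equation on the entry `A i j` reads `z ^ 21 * A i j * z ^ (-20) = A i j`, i.e. `z * A i j = A i j`,
so for `z ≠ 1` the upper-left `2 × 2` block of `A` vanishes. A `3 × 3` matrix with a vanishing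
`2 × 2` block is singular, contradicting `det A = 1`.
-/

open Matrix

theorem Matrix.det_fin_three_eq_zero_of_upperLeft_eq_zero {R : Type*} [CommRing R]
    (M : Matrix (Fin 3) (Fin 3) R) (h₀₀ : M 0 0 = 0) (h₀₁ : M 0 1 = 0) (h₁₀ : M 1 0 = 0)
    (h₁₁ : M 1 1 = 0) : M.det = 0 := by
  simp [det_fin_three, h₀₀, h₀₁, h₁₀, h₁₁]

theorem eq_zero_of_zpow_mul_mul_zpow_neg_eq {K : Type*} [Field K] {z : K} (hz : z ≠ 0)
    {m n : ℤ} (hmn : z ^ (m - n) ≠ 1) {a : K} (h : z ^ m * a * z ^ (-n) = a) : a = 0 := by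
  have hscale : z ^ (m - n) * a = a := by
    rw [sub_eq_add_neg, zpow_add₀ hz]
    linear_combination h
  by_contra ha
  exact hmn (mul_eq_right₀ ha |>.mp hscale)

/-- The circle action on `SU(3)` with Eschenburg parameters `(21, 21, -2; 20, 20, 0)` is free. -/
theorem eschenburg_action_free_21_21_m2_20_20_0 :
    ∀ z : ℂ, ‖z‖ = 1 →
    ∀ A : Matrix.specialUnitaryGroup (Fin 3) ℂ,
      Matrix.diagonal ![z ^ (21 : ℤ), z ^ (21 : ℤ), z ^ (-2 : ℤ)] *
          (A : Matrix (Fin 3) (Fin 3) ℂ) *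
          Matrix.diagonal ![z ^ (-20 : ℤ), z ^ (-20 : ℤ), 1] = (A : Matrix (Fin 3) (Fin 3) ℂ) →
      z = 1 := by
  intro z hz A hA
  by_contra hz₁
  have hz₀ : z ≠ 0 := by
    rintro rfl
    simp at hz
  have hblock (i j : Fin 2) : (A : Matrix (Fin 3) (Fin 3) ℂ) i.castSucc j.castSucc = 0 := by
    have hentry := congrFun (congrFun hA i.castSucc) j.castSucc
    rw [mul_diagonal, diagonal_mul] at hentry
    refine eq_zero_of_zpow_mul_mul_zpow_neg_eq hz₀ (m := 21) (n := 20) (by norm_num [hz₁]) ?_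
    fin_cases i <;> fin_cases j <;> exact hentry
  have hdet : (A : Matrix (Fin 3) (Fin 3) ℂ).det = 1 := A.2.2
  rw [det_fin_three_eq_zero_of_upperLeft_eq_zero _ (hblock 0 0) (hblock 0 1) (hblock 1 0)
    (hblock 1 1)] at hdet
  exact zero_ne_one hdet
end
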